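/- arXiv:2003.01430 — 3 statements merged into one kernel-verified Lean document; each statement's English description precedes it below -/
import Mathlib

section
/- Let a, b > 0 with 0 < ε < 1, and suppose â, b̂ > 0 satisfy (1-ε)a ≤ â ≤ (1+ε)a and (1-ε)b ≤ b̂ ≤ (1+ε)b. Then ŝ = (b̂ - â)/max(â, b̂) satisfies ŝ ≤ s + 4ε/(1-ε), where s = (b - a)/max(a, b). -/
/-!
Writing `s = min (b / a) 1 - min (a / b) 1`, both truncated ratios move by at most `c - 1`
when the ratio `b / a` is distorted by a factor at most `c = (1 + ε) / (1 - ε)`, because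
`min (c * x) 1 ≤ c * min x 1 ≤ min x 1 + (c - 1)`. Hence `ŝ ≤ s + 2 (c - 1) = s + 4ε / (1 - ε)`.
-/

noncomputable def silhouette (a b : ℝ) : ℝ := (b - a) / max a b

lemma silhouette_eq_min_sub_min {a b : ℝ} (ha : 0 < a) (hb : 0 < b) :
    silhouette a b = min (b / a) 1 - min (a / b) 1 := by
  unfold silhouette
  rcases le_total a b with hab | hba
  · rw [max_eq_right hab, min_eq_right ((one_le_div ha).2 hab),
      min_eq_left ((div_le_one hb).2 hab)]
    field_simp
  · rw [max_eq_left hba, min_eq_left ((div_le_one ha).2 hba),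
      min_eq_right ((one_le_div hb).2 hba)]
    field_simp

lemma min_one_le_min_one_add_of_le_mul {x y c : ℝ} (hc : 1 ≤ c) (h : y ≤ c * x) :
    min y 1 ≤ min x 1 + (c - 1) := by
  have hc0 : 0 ≤ c := zero_le_one.trans hc
  calc min y 1 ≤ min (c * x) (c * 1) := min_le_min h (by linarith)
    _ = c * min x 1 := (mul_min_of_nonneg x 1 hc0).symm
    _ ≤ min x 1 + (c - 1) := by nlinarith [min_le_right x 1]

lemma silhouette_le_add_of_mul_le_mul {a b a' b' c : ℝ} (ha : 0 < a) (hb : 0 < b)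
    (ha' : 0 < a') (hb' : 0 < b') (hc : 1 ≤ c) (h : a * b' ≤ c * (a' * b)) :
    silhouette a' b' ≤ silhouette a b + 2 * (c - 1) := by
  have hratio : b' / a' ≤ c * (b / a) := by
    rw [← mul_div_assoc, div_le_div_iff₀ ha' ha]
    linarith
  have hratio_inv : a / b ≤ c * (a' / b') := by
    rw [← mul_div_assoc, div_le_div_iff₀ hb hb']
    linarith
  rw [silhouette_eq_min_sub_min ha hb, silhouette_eq_min_sub_min ha' hb']
  linarith [min_one_le_min_one_add_of_le_mul hc hratio,
    min_one_le_min_one_add_of_le_mul hc hratio_inv]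

theorem silhouette_upper_bound_general (a b ah bh ε : ℝ) (ha : 0 < a) (hb : 0 < b)
    (hah : 0 < ah) (hbh : 0 < bh) (hε : 0 < ε) (hε1 : ε < 1)
    (ha1 : (1 - ε) * a ≤ ah)
    (hb2 : bh ≤ (1 + ε) * b) :
    (bh - ah) / max ah bh ≤ (b - a) / max a b + 4 * ε / (1 - ε) := by
  have hε' : 0 < 1 - ε := by linarith
  set c := (1 + ε) / (1 - ε) with hc_def
  have hc : 1 ≤ c := by rw [le_div_iff₀ hε']; linarith
  have hcross : a * bh ≤ c * (ah * b) :=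
    calc a * bh ≤ (1 + ε) * (a * b) :=
          (mul_le_mul_of_nonneg_left hb2 ha.le).trans_eq (by ring)
      _ = c * ((1 - ε) * a * b) := by rw [hc_def]; field_simp
      _ ≤ c * (ah * b) := by gcongr
  have hc_sub : 2 * (c - 1) = 4 * ε / (1 - ε) := by rw [hc_def]; field_simp; ring
  simpa only [silhouette, hc_sub] using
    silhouette_le_add_of_mul_le_mul ha hb hah hbh hc hcross

theorem silhouette_upper_bound (a b ah bh ε : ℝ) (ha : 0 < a) (hb : 0 < b)
    (hah : 0 < ah) (hbh : 0 < bh) (hε : 0 < ε) (hε1 : ε < 1)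
    (ha1 : (1 - ε) * a ≤ ah) (ha2 : ah ≤ (1 + ε) * a)
    (hb1 : (1 - ε) * b ≤ bh) (hb2 : bh ≤ (1 + ε) * b) :
    (bh - ah) / max ah bh ≤ (b - a) / max a b + 4 * ε / (1 - ε) :=
  silhouette_upper_bound_general a b ah bh ε ha hb hah hbh hε hε1 ha1 hb2
end

section
/- Let a, b > 0 with 0 < ε < 1, and suppose â, b̂ > 0 satisfy (1-ε)a ≤ â ≤ (1+ε)a and (1-ε)b ≤ b̂ ≤ (1+ε)b. Then |(b̂-â)/max(â,b̂) - (b-a)/max(a,b)| ≤ 4ε/(1-ε). -/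
/-!
Write `u = b - a`, `M = max a b`, `û = b̂ - â` and `M̂ = max â b̂`. The hypotheses give
`|â - a| ≤ ε a` and `|b̂ - b| ≤ ε b`, so `|û - u| ≤ 2 ε M` and, since `max` is 1-Lipschitz,
`|M̂ - M| ≤ ε M`; in particular `M̂ ≥ (1 - ε) M`. Splitting
`û / M̂ - u / M = (û - u) / M̂ + (u / M) (M - M̂) / M̂` with `|u / M| ≤ 1` bounds the error by
`3 ε M / M̂ ≤ 3 ε / (1 - ε)`.
-/

lemma abs_sub_le_mul_of_le_of_le {x a ε : ℝ} (h₁ : (1 - ε) * a ≤ x) (h₂ : x ≤ (1 + ε) * a) :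
    |x - a| ≤ ε * a :=
  abs_sub_le_iff.2 ⟨by linarith, by linarith⟩

lemma abs_sub_le_max_of_nonneg {a b : ℝ} (ha : 0 ≤ a) (hb : 0 ≤ b) : |b - a| ≤ max a b :=
  abs_sub_le_iff.2 ⟨by linarith [le_max_right a b], by linarith [le_max_left a b]⟩

lemma abs_max_sub_max_le_mul_max {x y a b ε : ℝ} (hε : 0 ≤ ε) (hx : |x - a| ≤ ε * a)
    (hy : |y - b| ≤ ε * b) : |max x y - max a b| ≤ ε * max a b :=
  (abs_max_sub_max_le_max x y a b).trans <| max_le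
    (hx.trans <| mul_le_mul_of_nonneg_left (le_max_left a b) hε)
    (hy.trans <| mul_le_mul_of_nonneg_left (le_max_right a b) hε)

lemma abs_sub_sub_sub_le_mul_max {x y a b ε : ℝ} (hε : 0 ≤ ε) (hx : |x - a| ≤ ε * a)
    (hy : |y - b| ≤ ε * b) : |(y - x) - (b - a)| ≤ 2 * ε * max a b :=
  calc |(y - x) - (b - a)| = |(y - b) - (x - a)| := by ring_nf
    _ ≤ |y - b| + |x - a| := abs_sub _ _
    _ ≤ ε * max a b + ε * max a b := by
      gcongr
      exacts [hy.trans (by gcongr; exact le_max_right a b),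
        hx.trans (by gcongr; exact le_max_left a b)]
    _ = 2 * ε * max a b := by ring

lemma abs_div_sub_div_le {u u' M M' : ℝ} (hM : 0 < M) (hM' : 0 < M') (hu : |u| ≤ M) :
    |u' / M' - u / M| ≤ (|u' - u| + |M' - M|) / M' := by
  have hsplit : u' / M' - u / M = (u' - u) / M' + u / M * (M - M') / M' := by
    field_simp
    ring
  have hratio : |u / M| ≤ 1 := by
    rwa [abs_div, abs_of_pos hM, div_le_one hM]
  calc |u' / M' - u / M|
      ≤ |(u' - u) / M'| + |u / M * (M - M') / M'| := hsplit ▸ abs_add_le _ _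
    _ = |u' - u| / M' + |u / M| * |M - M'| / M' := by
        rw [abs_div, abs_div, abs_mul, abs_of_pos hM']
    _ ≤ |u' - u| / M' + 1 * |M - M'| / M' := by gcongr
    _ = (|u' - u| + |M' - M|) / M' := by rw [abs_sub_comm M, one_mul, add_div]

theorem silhouette_additive_error_general (a b ah bh ε : ℝ) (ha : 0 < a) (hb : 0 < b)
    (hε : 0 < ε) (hε1 : ε < 1)
    (ha1 : (1 - ε) * a ≤ ah) (ha2 : ah ≤ (1 + ε) * a)
    (hb1 : (1 - ε) * b ≤ bh) (hb2 : bh ≤ (1 + ε) * b) :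
    |(bh - ah) / max ah bh - (b - a) / max a b| ≤ 4 * ε / (1 - ε) := by
  have hM : 0 < max a b := lt_max_of_lt_left ha
  have hδa := abs_sub_le_mul_of_le_of_le ha1 ha2
  have hδb := abs_sub_le_mul_of_le_of_le hb1 hb2
  have hnum := abs_sub_sub_sub_le_mul_max hε.le hδa hδb
  have hden := abs_max_sub_max_le_mul_max hε.le hδa hδb
  have hMh : (1 - ε) * max a b ≤ max ah bh := by linarith [neg_abs_le (max ah bh - max a b)]
  have hMh_pos : 0 < max ah bh := lt_of_lt_of_le (mul_pos (by linarith) hM) hMh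
  calc |(bh - ah) / max ah bh - (b - a) / max a b|
      ≤ (|(bh - ah) - (b - a)| + |max ah bh - max a b|) / max ah bh :=
        abs_div_sub_div_le hM hMh_pos (abs_sub_le_max_of_nonneg ha.le hb.le)
    _ ≤ 3 * ε * max a b / ((1 - ε) * max a b) := by
        gcongr
        linarith
    _ = 3 * ε / (1 - ε) := by rw [mul_div_mul_right _ _ hM.ne']
    _ ≤ 4 * ε / (1 - ε) := by gcongr; linarith

theorem silhouette_additive_error (a b ah bh ε : ℝ) (ha : 0 < a) (hb : 0 < b)
    (hah : 0 < ah) (hbh : 0 < bh) (hε : 0 < ε) (hε1 : ε < 1)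
    (ha1 : (1 - ε) * a ≤ ah) (ha2 : ah ≤ (1 + ε) * a)
    (hb1 : (1 - ε) * b ≤ bh) (hb2 : bh ≤ (1 + ε) * b) :
    |(bh - ah) / max ah bh - (b - a) / max a b| ≤ 4 * ε / (1 - ε) :=
  silhouette_additive_error_general a b ah bh ε ha hb hε hε1 ha1 ha2 hb1 hb2
end

section
/- Let C be a finite set with |C| ≥ 2 in a metric space, and for e ∈ C define m(e) as the median of the distances from e to the other elements of C. Call e well positioned if m(e) ≤ 2·min_{e' ∈ C} m(e'). Then at least half of the elements of C are well positioned. -/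
/-- The median of the distances from `e` to the other elements of `C`:
the `⌈(|C|-1)/2⌉`-th smallest of these distances. -/
noncomputable def medianDist {α : Type*} [MetricSpace α] [DecidableEq α] (C : Finset α) (e : α) : ℝ :=
  (((C.erase e).val.map (dist e)).sort (· ≤ ·)).getD (((C.card - 1) + 1) / 2 - 1) 0

/-- `e` is well positioned in `C` if its median distance is at most twice the
minimum median distance over all elements of `C`. -/
noncomputable def wellPositioned {α : Type*} [MetricSpace α] [DecidableEq α]
    (C : Finset α) (hC : C.Nonempty) (e : α) : Prop :=
  medianDist C e ≤ 2 * C.inf' hC (medianDist C)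

/-!
Let `e₀` minimize the median distance `m = m(e₀)`. By definition of the median, the closed ball of
radius `m` about `e₀` contains, besides `e₀`, at least half of the other points of `C`. For any `e`
in that ball, the triangle inequality puts the whole ball inside the closed ball of radius `2m`
about `e`, so `m(e) ≤ 2m`. Hence the ball, which has more than `|C| / 2` points, consists of well
positioned points.
-/

open Finset

theorem List.Pairwise.getElem_le_iff_lt_countP {α : Type*} [LinearOrder α] {l : List α}
    (hl : l.Pairwise (· ≤ ·)) {i : ℕ} (hi : i < l.length) (b : α) :
    l[i] ≤ b ↔ i < l.countP (· ≤ b) := by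
  constructor
  · intro hib
    have hprefix : (l.take (i + 1)).countP (· ≤ b) = i + 1 := by
      rw [List.countP_eq_length.2, List.length_take]
      · omega
      intro x hx
      obtain ⟨j, hj, rfl⟩ := List.getElem_of_mem hx
      rw [List.length_take] at hj
      have hji : l[j] ≤ l[i] := hl.rel_get_of_le (a := ⟨j, by omega⟩) (b := ⟨i, hi⟩) (Fin.mk_le_mk.2 (by omega))
      simpa [List.getElem_take] using hji.trans hib
    have := (List.take_sublist (i + 1) l).countP_le (p := (· ≤ b))
    omega
  · intro hcount
    by_contra! hbi
    have hsuffix : (l.drop i).countP (· ≤ b) = 0 := by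
      rw [List.countP_eq_zero]
      intro x hx
      obtain ⟨j, hj, rfl⟩ := List.getElem_of_mem hx
      rw [List.length_drop] at hj
      have hij : l[i] ≤ l[i + j] := hl.rel_get_of_le (a := ⟨i, hi⟩) (b := ⟨i + j, by omega⟩) (Fin.mk_le_mk.2 (by omega))
      simpa [List.getElem_drop] using hbi.trans_le hij
    have hsplit := List.countP_append (l₁ := l.take i) (l₂ := l.drop i) (p := (· ≤ b))
    rw [List.take_append_drop, hsuffix] at hsplit
    have := (List.countP_le_length (l := l.take i) (p := (· ≤ b))).trans (List.length_take_le _ _)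
    omega

section medianDist

variable {α : Type*} [MetricSpace α] [DecidableEq α] {C : Finset α} {e : α}

-- `#C / 2 = ⌈(#C - 1) / 2⌉` is the rank of the median among the `#C - 1` distances.
theorem medianDist_le_iff_card_erase (h2 : 2 ≤ #C) (he : e ∈ C) (b : ℝ) :
    medianDist C e ≤ b ↔ #C / 2 ≤ #{x ∈ C.erase e | dist e x ≤ b} := by
  set l := ((C.erase e).val.map (dist e)).sort (· ≤ ·)
  have hlength : l.length = #C - 1 := by
    rw [Multiset.length_sort, Multiset.card_map, card_val, card_erase_of_mem he]
  have hcount : l.countP (· ≤ b) = #{x ∈ C.erase e | dist e x ≤ b} := by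
    rw [← Multiset.coe_countP, Multiset.sort_eq, Multiset.countP_map]
    rfl
  have hidx : (#C - 1 + 1) / 2 - 1 < l.length := by omega
  rw [medianDist, List.getD_eq_getElem _ _ hidx,
    (Multiset.pairwise_sort _ _).getElem_le_iff_lt_countP hidx, hcount]
  omega

theorem medianDist_nonneg (h2 : 2 ≤ #C) (he : e ∈ C) : 0 ≤ medianDist C e := by
  have hcard := (medianDist_le_iff_card_erase h2 he (medianDist C e)).1 le_rfl
  obtain ⟨x, hx⟩ : ({x ∈ C.erase e | dist e x ≤ medianDist C e} : Finset α).Nonempty :=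
    card_pos.1 (by omega)
  exact dist_nonneg.trans (mem_filter.1 hx).2

theorem medianDist_le_iff (h2 : 2 ≤ #C) (he : e ∈ C) (b : ℝ) :
    medianDist C e ≤ b ↔ #C / 2 + 1 ≤ #{x ∈ C | dist e x ≤ b} := by
  constructor
  · intro hm
    have hb : 0 ≤ b := (medianDist_nonneg h2 he).trans hm
    rw [medianDist_le_iff_card_erase h2 he, filter_erase,
      card_erase_of_mem (mem_filter.2 ⟨he, by simpa using hb⟩)] at hm
    omega
  · intro hcard
    rw [medianDist_le_iff_card_erase h2 he, filter_erase]
    have := pred_card_le_card_erase (s := ({x ∈ C | dist e x ≤ b} : Finset α)) (a := e)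
    omega

theorem medianDist_le_two_mul_of_dist_le {e₀ : α} (h2 : 2 ≤ #C) (he₀ : e₀ ∈ C) (he : e ∈ C)
    (hdist : dist e₀ e ≤ medianDist C e₀) : medianDist C e ≤ 2 * medianDist C e₀ := by
  rw [medianDist_le_iff h2 he, two_mul]
  refine ((medianDist_le_iff h2 he₀ _).1 le_rfl).trans (card_le_card fun x hx => ?_)
  rw [mem_filter] at hx ⊢
  exact ⟨hx.1, (dist_triangle_left e x e₀).trans (add_le_add hdist hx.2)⟩

end medianDist

theorem half_well_positioned {α : Type*} [MetricSpace α] [DecidableEq α]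
    (C : Finset α) (h2 : 2 ≤ C.card) (hC : C.Nonempty) :
    C.card ≤ 2 * (C.filter (fun e => medianDist C e ≤ 2 * C.inf' hC (medianDist C))).card := by
  obtain ⟨e₀, he₀, hmin⟩ := C.exists_mem_eq_inf' hC (medianDist C)
  set ball := ({x ∈ C | dist e₀ x ≤ medianDist C e₀} : Finset α)
  have hball : #C / 2 + 1 ≤ #ball := (medianDist_le_iff h2 he₀ _).1 le_rfl
  have hball_good : ball ⊆ C.filter (fun e => medianDist C e ≤ 2 * C.inf' hC (medianDist C)) := by
    intro e he
    rw [mem_filter] at he ⊢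
    exact ⟨he.1, hmin ▸ medianDist_le_two_mul_of_dist_le h2 he₀ he.1 he.2⟩
  have := card_le_card hball_good
  omega
end
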